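/- Suppose unconfoundedness holds at every t ∈ {0,…,J} (i.e. μ̄_t = m_t for all t). Then the conditional contrast of the observed outcome on the binarized indicator identifies the natural conditional average treatment effect: E[Y | A ∩ {D = 1}] − E[Y | A ∩ {D = 0}] = Σ_{t=1}^J (e_t / Σ_{s=1}^J e_s)·(m_t − m_0). -/

import Mathlib

/-! With `Q := P[|A]` one has `P[|A ∩ S] = Q[|S]`, so everything happens under `Q`. On the cell
`{T = t}` the observed outcome is `Y t`, so by the law of total expectation over the cells,
`E[Y | A ∩ {D = 1}]` is the mean of the cell means `μ̄_t`, `t ≥ 1`, weighted by `e_t = Q {T = t}`,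
while `E[Y | A ∩ {D = 0}] = μ̄_0`. Unconfoundedness turns each `μ̄_t` into `m_t`. -/

open MeasureTheory ProbabilityTheory Finset

theorem Finset.sum_div_sum_mul_sub {ι K : Type*} [Field K] {s : Finset ι} {w : ι → K}
    (hw : ∑ i ∈ s, w i ≠ 0) (x : ι → K) (c : K) :
    ∑ i ∈ s, (w i / ∑ j ∈ s, w j) * (x i - c) = (∑ i ∈ s, w i)⁻¹ * ∑ i ∈ s, w i * x i - c := by
  simp only [div_eq_inv_mul, mul_assoc, ← mul_sum, mul_sub, sum_sub_distrib, ← sum_mul]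
  rw [inv_mul_cancel_left₀ hw]

namespace ProbabilityTheory

variable {Ω E : Type*} [MeasurableSpace Ω] {μ : Measure Ω} [NormedAddCommGroup E]

theorem _root_.MeasureTheory.Integrable.cond {f : Ω → E} (hf : Integrable f μ) (s : Set Ω) :
    Integrable f μ[|s] := by
  by_cases hs : μ s = 0
  · simp [cond_eq_zero_of_meas_eq_zero hs]
  · exact hf.restrict.smul_measure (ENNReal.inv_ne_top.2 hs)

variable [NormedSpace ℝ E]

theorem integral_cond_eq_inv_smul_setIntegral (s : Set Ω) (f : Ω → E) :
    ∫ ω, f ω ∂μ[|s] = (μ.real s)⁻¹ • ∫ ω in s, f ω ∂μ := by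
  rw [cond, integral_smul_measure, ENNReal.toReal_inv, measureReal_def]

theorem setIntegral_eq_measureReal_smul_integral_cond {s : Set Ω} (hs : μ s ≠ ⊤) (f : Ω → E) :
    ∫ ω in s, f ω ∂μ = μ.real s • ∫ ω, f ω ∂μ[|s] := by
  by_cases h : μ.real s = 0
  · rw [h, zero_smul, setIntegral_measure_zero _ ((measureReal_eq_zero_iff hs).1 h)]
  · rw [integral_cond_eq_inv_smul_setIntegral, smul_inv_smul₀ h]

variable {ι : Type*} [MeasurableSpace ι] [MeasurableSingletonClass ι] {T : Ω → ι}
  {Y : ι → Ω → E}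

theorem setIntegral_preimage_finset_eq_sum (hT : Measurable T) (s : Finset ι)
    (hY : ∀ i ∈ s, Integrable (Y i) μ) :
    ∫ ω in T ⁻¹' s, Y (T ω) ω ∂μ = ∑ i ∈ s, ∫ ω in T ⁻¹' {i}, Y i ω ∂μ := by
  have hfib : ∀ i, MeasurableSet (T ⁻¹' {i}) := fun i => hT (measurableSet_singleton i)
  have hY_fib : ∀ i, Set.EqOn (fun ω => Y (T ω) ω) (Y i) (T ⁻¹' {i}) :=
    fun i ω (hω : T ω = i) => by dsimp only; rw [hω]
  rw [← Set.biUnion_preimage_singleton, Finset.set_biUnion_coe,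
    integral_biUnion_finset s (fun i _ => hfib i)
      (fun i _ j _ hij => (Set.disjoint_singleton.2 hij).preimage T)
      (fun i hi => (hY i hi).integrableOn.congr_fun (hY_fib i).symm (hfib i))]
  exact sum_congr rfl fun i _ => setIntegral_congr_fun (hfib i) (hY_fib i)

theorem integral_cond_preimage_finset [IsFiniteMeasure μ] (hT : Measurable T) (s : Finset ι)
    (hY : ∀ i ∈ s, Integrable (Y i) μ) :
    ∫ ω, Y (T ω) ω ∂μ[|T ⁻¹' s] = (∑ i ∈ s, μ.real (T ⁻¹' {i}))⁻¹ •
      ∑ i ∈ s, μ.real (T ⁻¹' {i}) • ∫ ω, Y i ω ∂μ[|T ⁻¹' {i}] := by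
  rw [integral_cond_eq_inv_smul_setIntegral, setIntegral_preimage_finset_eq_sum hT s hY,
    sum_measureReal_preimage_singleton s fun i _ => hT (measurableSet_singleton i)]
  simp only [setIntegral_eq_measureReal_smul_integral_cond (measure_ne_top μ _)]

end ProbabilityTheory

theorem binarized_contrast_identifies_nATE_general
    {Ω : Type*} [MeasurableSpace Ω] (P : Measure Ω) [IsProbabilityMeasure P]
    (J : ℕ) (hJ : 1 ≤ J)
    (T : Ω → ℕ) (hT : Measurable T) (hTle : ∀ ω, T ω ≤ J)
    (Y : ℕ → Ω → ℝ) (hYint : ∀ t, Integrable (Y t) P)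
    (A : Set Ω) (hA : MeasurableSet A)
    (hpos : ∀ t ≤ J, 0 < P (A ∩ {ω | T ω = t}))
    (Yobs : Ω → ℝ)
    (hYobs : ∀ ω, Yobs ω = ∑ t ∈ Finset.range (J + 1), if T ω = t then Y t ω else 0)
    (e : ℕ → ℝ) (he : ∀ t, e t = ((P[|A]) {ω | T ω = t}).toReal)
    (m : ℕ → ℝ)
    (μbar : ℕ → ℝ)
    (hμbar : ∀ t, μbar t = ∫ ω, Y t ω ∂(P[|(A ∩ {ω | T ω = t})]))
    (hunconf : ∀ t ≤ J, μbar t = m t) :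
    (∫ ω, Yobs ω ∂(P[|(A ∩ {ω | T ω ≠ 0})])) - (∫ ω, Yobs ω ∂(P[|(A ∩ {ω | T ω = 0})]))
      = ∑ t ∈ Finset.Icc 1 J, (e t / (∑ s ∈ Finset.Icc 1 J, e s)) * (m t - m 0) := by
  have hYobs_eq : Yobs = fun ω => Y (T ω) ω := funext fun ω => by
    rw [hYobs, sum_ite_eq, if_pos (mem_range.2 (Nat.lt_succ_of_le (hTle ω)))]
  have hD : {ω | T ω ≠ 0} = T ⁻¹' ↑(Icc 1 J) := by
    ext ω; simp [Nat.one_le_iff_ne_zero, hTle ω]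
  have hcond : ∀ S, MeasurableSet S → P[|A ∩ S] = P[|A][|S] :=
    fun S hS => (cond_cond_eq_cond_inter hA hS P).symm
  have hcell_mass : ∀ t, P[|A].real (T ⁻¹' {t}) = e t := fun t => (he t).symm
  have he_pos : ∀ t ≤ J, 0 < e t := fun t ht => by
    rw [he]
    exact ENNReal.toReal_pos (cond_pos_of_inter_ne_zero hA (hpos t ht).ne').ne'
      (measure_ne_top _ _)
  have hcell_mean : ∀ t ≤ J, ∫ ω, Y t ω ∂P[|A][|T ⁻¹' {t}] = m t := fun t ht => by
    rw [← hcond _ (hT (measurableSet_singleton t)), ← hunconf t ht, hμbar]; rfl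
  have htreated : ∫ ω, Y (T ω) ω ∂P[|A ∩ T ⁻¹' ↑(Icc 1 J)]
      = (∑ t ∈ Icc 1 J, e t)⁻¹ * ∑ t ∈ Icc 1 J, e t * m t := by
    rw [hcond _ (hT (Icc 1 J).finite_toSet.measurableSet), integral_cond_preimage_finset hT _
      fun t _ => (hYint t).cond A]
    simp only [hcell_mass, smul_eq_mul]
    congr 1
    exact sum_congr rfl fun t ht => by rw [hcell_mean t (mem_Icc.1 ht).2]
  have hcontrol : ∫ ω, Y (T ω) ω ∂P[|A ∩ T ⁻¹' {0}] = m 0 := by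
    rw [hcond _ (hT (measurableSet_singleton 0)), ← coe_singleton,
      integral_cond_preimage_finset hT _ fun t _ => (hYint t).cond A]
    simp only [sum_singleton, hcell_mass, hcell_mean 0 (Nat.zero_le J), smul_eq_mul]
    exact inv_mul_cancel_left₀ (he_pos 0 (Nat.zero_le J)).ne' _
  have htreated_mass_pos : 0 < ∑ t ∈ Icc 1 J, e t :=
    sum_pos (fun t ht => he_pos t (mem_Icc.1 ht).2) (nonempty_Icc.2 hJ)
  rw [hYobs_eq, hD, sum_div_sum_mul_sub htreated_mass_pos.ne', ← htreated, ← hcontrol]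
  rfl

/-- Under unconfoundedness at every `t ∈ {0,…,J}`, the conditional contrast
of the observed outcome on the binarized indicator identifies the natural conditional
average treatment effect. -/
theorem binarized_contrast_identifies_nATE
    {Ω : Type*} [MeasurableSpace Ω] (P : Measure Ω) [IsProbabilityMeasure P]
    (J : ℕ) (hJ : 1 ≤ J)
    (T : Ω → ℕ) (hT : Measurable T) (hTle : ∀ ω, T ω ≤ J)
    (Y : ℕ → Ω → ℝ) (hYmeas : ∀ t, Measurable (Y t)) (hYint : ∀ t, Integrable (Y t) P)
    (A : Set Ω) (hA : MeasurableSet A)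
    (hpos : ∀ t ≤ J, 0 < P (A ∩ {ω | T ω = t}))
    (Yobs : Ω → ℝ)
    (hYobs : ∀ ω, Yobs ω = ∑ t ∈ Finset.range (J + 1), if T ω = t then Y t ω else 0)
    (e : ℕ → ℝ) (he : ∀ t, e t = ((P[|A]) {ω | T ω = t}).toReal)
    (m : ℕ → ℝ) (hm : ∀ t, m t = ∫ ω, Y t ω ∂(P[|A]))
    (μbar : ℕ → ℝ)
    (hμbar : ∀ t, μbar t = ∫ ω, Y t ω ∂(P[|(A ∩ {ω | T ω = t})]))
    (hunconf : ∀ t ≤ J, μbar t = m t) :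
    (∫ ω, Yobs ω ∂(P[|(A ∩ {ω | T ω ≠ 0})])) - (∫ ω, Yobs ω ∂(P[|(A ∩ {ω | T ω = 0})]))
      = ∑ t ∈ Finset.Icc 1 J, (e t / (∑ s ∈ Finset.Icc 1 J, e s)) * (m t - m 0) :=
  binarized_contrast_identifies_nATE_general P J hJ T hT hTle Y hYint A hA hpos Yobs hYobs e he m
    μbar hμbar hunconf
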